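/- Let f be a legal configuration of the edged cube Q̄_L accessible from the solved configuration f_solved. Then for each pair of colors (γ, γ′) and each non-corner edge cluster C, there is at most one pair of coupled edge cells (c, c′) with c ∈ C, f(c) = γ and f(c′) = γ′. Similarly, for each triple of colors (γ, γ′, γ″), there is at most one triple of mutually coupled corner cells carrying those three colors under f. -/

import Mathlib

universe u v

namespace InfRubik

/-- The three axes of the cube. -/
inductive Axis : Type
  | x | y | z
  deriving DecidableEq

/-- The six colors of the Rubik's cube.  A *configuration* is a map from cells to
`Option Color`, where `none` plays the role of the non-color `NaC`. -/
inductive Color : Type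
  | red | white | green | orange | yellow | blue
  deriving DecidableEq

/-- The set `L̄† = -L ∪ {0} ∪ L ∪ {±∞}` of extended coordinates. -/
inductive ExtCoord (L : Type u) : Type u
  | neg : L → ExtCoord L
  | zero : ExtCoord L
  | pos : L → ExtCoord L
  | negInf : ExtCoord L
  | posInf : ExtCoord L

namespace ExtCoord

variable {L : Type u}

/-- The reflection `r ↦ -r`. -/
def reflect : ExtCoord L → ExtCoord L
  | .neg r => .pos r
  | .zero => .zero
  | .pos r => .neg r
  | .negInf => .posInf
  | .posInf => .negInf

@[simp] theorem reflect_reflect (a : ExtCoord L) : a.reflect.reflect = a := by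
  cases a <;> rfl

/-- Whether a coordinate is `±∞`. -/
def isInfB : ExtCoord L → Bool
  | .negInf => true
  | .posInf => true
  | _ => false

@[simp] theorem isInfB_reflect (a : ExtCoord L) : a.reflect.isInfB = a.isInfB := by
  cases a <;> rfl

/-- Whether a coordinate is `0`. -/
def isZeroB : ExtCoord L → Bool
  | .zero => true
  | _ => false

@[simp] theorem isZeroB_reflect (a : ExtCoord L) : a.reflect.isZeroB = a.isZeroB := by
  cases a <;> rfl

end ExtCoord

/-- A point of the ambient space `L̄† × L̄† × L̄†`. -/
abbrev Triple (L : Type u) := ExtCoord L × ExtCoord L × ExtCoord L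

/-- The coordinate of a point along an axis. -/
def Triple.coord {L : Type u} : Axis → Triple L → ExtCoord L
  | .x, p => p.1
  | .y, p => p.2.1
  | .z, p => p.2.2

/-- Quarter-turn rotation of the ambient space about an axis (right-hand rule). -/
def rot {L : Type u} : Axis → Triple L → Triple L
  | .x, p => (p.1, p.2.2.reflect, p.2.1)
  | .y, p => (p.2.2, p.2.1, p.1.reflect)
  | .z, p => (p.2.1.reflect, p.1, p.2.2)

/-- Inverse quarter-turn rotation of the ambient space about an axis. -/
def rotInv {L : Type u} : Axis → Triple L → Triple L
  | .x, p => (p.1, p.2.2, p.2.1.reflect)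
  | .y, p => (p.2.2.reflect, p.2.1, p.1)
  | .z, p => (p.2.1, p.1.reflect, p.2.2)

@[simp] theorem rotInv_rot {L : Type u} (i : Axis) (p : Triple L) : rotInv i (rot i p) = p := by
  cases i <;> simp [rot, rotInv]

@[simp] theorem rot_rotInv {L : Type u} (i : Axis) (p : Triple L) : rot i (rotInv i p) = p := by
  cases i <;> simp [rot, rotInv]

/-- The number of infinite coordinates of a point. -/
def infCount {L : Type u} (p : Triple L) : ℕ :=
  (if p.1.isInfB then 1 else 0) + (if p.2.1.isInfB then 1 else 0) +
    (if p.2.2.isInfB then 1 else 0)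

/-- The number of zero coordinates of a point. -/
def zeroCount {L : Type u} (p : Triple L) : ℕ :=
  (if p.1.isZeroB then 1 else 0) + (if p.2.1.isZeroB then 1 else 0) +
    (if p.2.2.isZeroB then 1 else 0)

theorem infCount_rot {L : Type u} (i : Axis) (p : Triple L) : infCount (rot i p) = infCount p := by
  obtain ⟨a, b, c⟩ := p
  cases i <;> cases a <;> cases b <;> cases c <;> rfl

theorem infCount_rotInv {L : Type u} (i : Axis) (p : Triple L) :
    infCount (rotInv i p) = infCount p := by
  obtain ⟨a, b, c⟩ := p
  cases i <;> cases a <;> cases b <;> cases c <;> rfl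

@[simp] theorem coord_rot_self {L : Type u} (i : Axis) (p : Triple L) :
    (rot i p).coord i = p.coord i := by
  cases i <;> rfl

@[simp] theorem coord_rotInv_self {L : Type u} (i : Axis) (p : Triple L) :
    (rotInv i p).coord i = p.coord i := by
  cases i <;> rfl

/-- A cell of the *edgeless* cube `Q_L`: a point of the ambient space with exactly one
infinite coordinate. -/
def Cell (L : Type u) : Type u := {p : Triple L // infCount p = 1}

open Classical in
/-- The underlying map on points of the quarter-turn twist `T_{i,α}`. -/
noncomputable def qtTriple {L : Type u} (i : Axis) (α : ExtCoord L) (p : Triple L) : Triple L :=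
  if p.coord i = α then rot i p else p

open Classical in
/-- The underlying map on points of the inverse quarter-turn twist `T_{i,α}⁻¹`. -/
noncomputable def qtTripleInv {L : Type u} (i : Axis) (α : ExtCoord L) (p : Triple L) : Triple L :=
  if p.coord i = α then rotInv i p else p

theorem qtTripleInv_qtTriple {L : Type u} (i : Axis) (α : ExtCoord L) (p : Triple L) :
    qtTripleInv i α (qtTriple i α p) = p := by
  classical
  by_cases h : p.coord i = α <;> simp [qtTriple, qtTripleInv, h]

theorem qtTriple_qtTripleInv {L : Type u} (i : Axis) (α : ExtCoord L) (p : Triple L) :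
    qtTriple i α (qtTripleInv i α p) = p := by
  classical
  by_cases h : p.coord i = α <;> simp [qtTriple, qtTripleInv, h]

theorem infCount_qtTriple {L : Type u} (i : Axis) (α : ExtCoord L) (p : Triple L) :
    infCount (qtTriple i α p) = infCount p := by
  classical
  by_cases h : p.coord i = α <;> simp [qtTriple, h, infCount_rot]

theorem infCount_qtTripleInv {L : Type u} (i : Axis) (α : ExtCoord L) (p : Triple L) :
    infCount (qtTripleInv i α p) = infCount p := by
  classical
  by_cases h : p.coord i = α <;> simp [qtTripleInv, h, infCount_rotInv]

/-- The quarter-turn twist `T_{i,α}` of the edgeless cube, as a permutation of cells. -/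
noncomputable def quarterTurn {L : Type u} (i : Axis) (α : ExtCoord L) : Equiv.Perm (Cell L) where
  toFun c := ⟨qtTriple i α c.1, by rw [infCount_qtTriple]; exact c.2⟩
  invFun c := ⟨qtTripleInv i α c.1, by rw [infCount_qtTripleInv]; exact c.2⟩
  left_inv c := Subtype.ext (qtTripleInv_qtTriple i α c.1)
  right_inv c := Subtype.ext (qtTriple_qtTripleInv i α c.1)

/-- The basic twists of the edgeless cube: quarter turns, half turns and reverse
quarter turns of a single layer. -/
def IsBasic (L : Type u) (π : Equiv.Perm (Cell L)) : Prop :=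
  ∃ (i : Axis) (α : ExtCoord L),
    π = quarterTurn i α ∨ π = quarterTurn i α ^ 2 ∨ π = (quarterTurn i α)⁻¹

/-! ### The edged cube -/

/-- How a quarter-turn about axis `i` transports the face tag of a cell. -/
def tagMap : Axis → Axis → Axis
  | .x, .x => .x
  | .x, .y => .z
  | .x, .z => .y
  | .y, .x => .z
  | .y, .y => .y
  | .y, .z => .x
  | .z, .x => .y
  | .z, .y => .x
  | .z, .z => .z

@[simp] theorem tagMap_tagMap (i j : Axis) : tagMap i (tagMap i j) = j := by
  cases i <;> cases j <;> rfl

theorem isInfB_coord_tagMap_rot {L : Type u} (i j : Axis) (p : Triple L) :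
    ((rot i p).coord (tagMap i j)).isInfB = (p.coord j).isInfB := by
  cases i <;> cases j <;> simp [rot, Triple.coord, tagMap]

theorem isInfB_coord_tagMap_rotInv {L : Type u} (i j : Axis) (p : Triple L) :
    ((rotInv i p).coord (tagMap i j)).isInfB = (p.coord j).isInfB := by
  cases i <;> cases j <;> simp [rotInv, Triple.coord, tagMap]

/-- A cell of the *edged* cube `Q̄_L`: a point of the ambient space together with a tag
naming an axis, such that the coordinate along the tagged axis is infinite (the tag
indicates the face to which the cell belongs). -/
def ECell (L : Type u) : Type u := {q : Triple L × Axis // (q.1.coord q.2).isInfB = true}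

open Classical in
/-- The underlying map of the quarter-turn twist `T_{i,α}` of the edged cube. -/
noncomputable def eqtFun {L : Type u} (i : Axis) (α : ExtCoord L) (q : Triple L × Axis) :
    Triple L × Axis :=
  if q.1.coord i = α then (rot i q.1, tagMap i q.2) else q

open Classical in
/-- The underlying map of the reverse quarter-turn twist of the edged cube. -/
noncomputable def eqtFunInv {L : Type u} (i : Axis) (α : ExtCoord L) (q : Triple L × Axis) :
    Triple L × Axis :=
  if q.1.coord i = α then (rotInv i q.1, tagMap i q.2) else q

theorem eqtFunInv_eqtFun {L : Type u} (i : Axis) (α : ExtCoord L) (q : Triple L × Axis) :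
    eqtFunInv i α (eqtFun i α q) = q := by
  classical
  by_cases h : q.1.coord i = α <;> simp [eqtFun, eqtFunInv, h]

theorem eqtFun_eqtFunInv {L : Type u} (i : Axis) (α : ExtCoord L) (q : Triple L × Axis) :
    eqtFun i α (eqtFunInv i α q) = q := by
  classical
  by_cases h : q.1.coord i = α <;> simp [eqtFun, eqtFunInv, h]

theorem isInfB_eqtFun {L : Type u} (i : Axis) (α : ExtCoord L) (q : Triple L × Axis) :
    (((eqtFun i α q).1.coord (eqtFun i α q).2)).isInfB = ((q.1.coord q.2)).isInfB := by
  classical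
  by_cases h : q.1.coord i = α <;> simp [eqtFun, h, isInfB_coord_tagMap_rot]

theorem isInfB_eqtFunInv {L : Type u} (i : Axis) (α : ExtCoord L) (q : Triple L × Axis) :
    (((eqtFunInv i α q).1.coord (eqtFunInv i α q).2)).isInfB = ((q.1.coord q.2)).isInfB := by
  classical
  by_cases h : q.1.coord i = α <;> simp [eqtFunInv, h, isInfB_coord_tagMap_rotInv]

/-- The quarter-turn twist `T_{i,α}` of the edged cube, as a permutation of cells.  A face
twist moves, besides the cells of its face, also the coupled edge and corner cells of the
adjacent faces lying in the twisted layer. -/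
noncomputable def equarterTurn {L : Type u} (i : Axis) (α : ExtCoord L) :
    Equiv.Perm (ECell L) where
  toFun c := ⟨eqtFun i α c.1, by rw [isInfB_eqtFun]; exact c.2⟩
  invFun c := ⟨eqtFunInv i α c.1, by rw [isInfB_eqtFunInv]; exact c.2⟩
  left_inv c := Subtype.ext (eqtFunInv_eqtFun i α c.1)
  right_inv c := Subtype.ext (eqtFun_eqtFunInv i α c.1)

/-- The basic twists of the edged cube. -/
def IsEBasic (L : Type u) (π : Equiv.Perm (ECell L)) : Prop :=
  ∃ (i : Axis) (α : ExtCoord L),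
    π = equarterTurn i α ∨ π = equarterTurn i α ^ 2 ∨ π = (equarterTurn i α)⁻¹

/-! ### Transfinite sequences of twists and their action on labellings -/

open Classical in
/-- The eventual value of an ordinal-indexed family of `Option`-values: `some v` if the family
stabilizes on `some v` before `lam`, and `none` otherwise. -/
noncomputable def eventualVal {X : Type u} (lam : Ordinal.{v})
    (g : ∀ η, η < lam → Option X) : Option X :=
  if h : ∃ v : X, ∃ γ, γ < lam ∧ ∀ η (hη : η < lam), γ ≤ η → g η hη = some v
  then some h.choose else none

/-- Applying an ordinal-indexed sequence of permutations to an initial labelling: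
`run σ f0 θ` is the labelling obtained after the first `θ` moves, with
`f_{η+1}(c) = f_η(σ_η⁻¹ c)` at successors and the eventual value (or `NaC = none`)
at limits. -/
noncomputable def run {Cl : Type v} {X : Type u} (σ : Ordinal.{v} → Equiv.Perm Cl)
    (f0 : Cl → Option X) (θ : Ordinal.{v}) : Cl → Option X :=
  Ordinal.limitRecOn (motive := fun _ => Cl → Option X) θ f0
    (fun η fη c => fη ((σ η)⁻¹ c))
    (fun lam _ prev c => eventualVal lam (fun η h => prev η h c))

/-- A (transfinite) sequence of twists of length `len`, each of which satisfies the
predicate `B` (being a basic twist). -/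
structure TwistSeq (Cl : Type v) (B : Equiv.Perm Cl → Prop) : Type (v + 1) where
  len : Ordinal.{v}
  seq : Ordinal.{v} → Equiv.Perm Cl
  basic : ∀ η, η < len → B (seq η)

namespace TwistSeq

variable {Cl : Type v} {B : Equiv.Perm Cl → Prop}

/-- The terminal labelling obtained by applying a sequence of twists to `f0`. -/
noncomputable def terminal (s : TwistSeq Cl B) {X : Type u} (f0 : Cl → Option X) :
    Cl → Option X :=
  run s.seq f0 s.len

/-- A sequence of twists is convergent over `f0` if the terminal labelling is legal,
i.e. never takes the value `NaC = none`. -/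
def ConvOver (s : TwistSeq Cl B) {X : Type u} (f0 : Cl → Option X) : Prop :=
  ∀ c, s.terminal f0 c ≠ none

/-- A sequence of twists is universally convergent if it is convergent over the identity
labelling. -/
def UnivConv (s : TwistSeq Cl B) : Prop := s.ConvOver (fun c => some c)

/-- A sequence is twist-finite if each twist occurs in it only finitely many times. -/
def TwistFinite (s : TwistSeq Cl B) : Prop :=
  ∀ π : Equiv.Perm Cl, {η : Ordinal | η < s.len ∧ s.seq η = π}.Finite

/-- Two sequences are equivalent, `σ⃗ ∼ τ⃗`, when they produce the same terminal
configuration over every initial configuration. -/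
def Sim (s t : TwistSeq Cl B) : Prop :=
  ∀ f : Cl → Option Color, s.terminal f = t.terminal f

/-- Concatenation of twist sequences: `s.concat t` performs `s` and then `t`. -/
noncomputable def concat (s t : TwistSeq Cl B) : TwistSeq Cl B where
  len := s.len + t.len
  seq := fun η => if η < s.len then s.seq η else t.seq (η - s.len)
  basic := by
    intro η hη
    by_cases h : η < s.len
    · simpa [h] using s.basic η h
    · have hc : 0 < t.len := by
        rcases eq_zero_or_pos t.len with h0 | h0
        · rw [h0, add_zero] at hη; exact absurd hη h
        · exact h0
      have h2 : η - s.len < t.len := Ordinal.sub_lt_of_lt_add hη hc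
      simpa [h] using t.basic _ h2

/-- The empty sequence of twists. -/
def empty (Cl : Type v) (B : Equiv.Perm Cl → Prop) : TwistSeq Cl B where
  len := 0
  seq := fun _ => 1
  basic := fun η hη => absurd hη (by simp)

/-- `n`-fold self-concatenation of a sequence of twists. -/
noncomputable def npow (s : TwistSeq Cl B) : ℕ → TwistSeq Cl B
  | 0 => empty Cl B
  | n + 1 => (npow s n).concat s

end TwistSeq

/-- Basic sequences of twists of the edgeless cube `Q_L`. -/
abbrev BasicSeq (L : Type u) := TwistSeq (Cell L) (IsBasic L)

/-- Basic sequences of twists of the edged cube `Q̄_L`. -/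
abbrev EBasicSeq (L : Type u) := TwistSeq (ECell L) (IsEBasic L)

/-- `f` is accessible from `f0` when some basic sequence applied to `f0` is convergent with
terminal configuration `f`. -/
def Accessible {Cl : Type v} (B : Equiv.Perm Cl → Prop) (f0 f : Cl → Option Color) : Prop :=
  ∃ s : TwistSeq Cl B, s.ConvOver f0 ∧ s.terminal f0 = f

/-- A labelling is legal if it never takes the value `NaC = none`. -/
def IsLegal {Cl : Type v} {X : Type u} (f : Cl → Option X) : Prop := ∀ c, f c ≠ none

/-! ### Clusters, faces, and distinguished configurations -/

/-- The group of permutations of cells of the edgeless cube generated by the basic twists. -/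
def twistGroup (L : Type u) : Subgroup (Equiv.Perm (Cell L)) :=
  Subgroup.closure {π | IsBasic L π}

/-- The cluster of a cell of the edgeless cube: its orbit under the group generated by the
basic twists. -/
def cluster {L : Type u} (c : Cell L) : Set (Cell L) :=
  {d | ∃ g ∈ twistGroup L, g c = d}

/-- The group of permutations of cells of the edged cube generated by the basic twists. -/
def etwistGroup (L : Type u) : Subgroup (Equiv.Perm (ECell L)) :=
  Subgroup.closure {π | IsEBasic L π}

/-- The cluster of a cell of the edged cube. -/
def ecluster {L : Type u} (c : ECell L) : Set (ECell L) :=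
  {d | ∃ g ∈ etwistGroup L, g c = d}

open Classical in
/-- The solved configuration of the edgeless cube: each face gets one of six distinct
colors. -/
noncomputable def fSolved (L : Type u) : Cell L → Option Color := fun c =>
  if c.1.1 = ExtCoord.posInf then some .red
  else if c.1.1 = ExtCoord.negInf then some .orange
  else if c.1.2.1 = ExtCoord.posInf then some .blue
  else if c.1.2.1 = ExtCoord.negInf then some .green
  else if c.1.2.2 = ExtCoord.posInf then some .white
  else some .yellow

/-- The color of each face: the face is named by the axis and the sign (`true` = `+∞`). -/
def faceColor : Axis → Bool → Color
  | .x, true => .red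
  | .x, false => .orange
  | .y, true => .blue
  | .y, false => .green
  | .z, true => .white
  | .z, false => .yellow

open Classical in
/-- The solved configuration of the edged cube. -/
noncomputable def efSolved (L : Type u) : ECell L → Option Color := fun c =>
  if c.1.1.coord c.1.2 = ExtCoord.posInf then some (faceColor c.1.2 true)
  else some (faceColor c.1.2 false)

/-- A center cell of the edgeless cube: two of its coordinates are `0`. -/
def IsCenter {L : Type u} (c : Cell L) : Prop := zeroCount c.1 = 2

/-- The global rotation of the whole cube about an axis, as a permutation of the cells of
the edgeless cube. -/
def rotAllPerm {L : Type u} (i : Axis) : Equiv.Perm (Cell L) where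
  toFun c := ⟨rot i c.1, by rw [infCount_rot]; exact c.2⟩
  invFun c := ⟨rotInv i c.1, by rw [infCount_rotInv]; exact c.2⟩
  left_inv c := Subtype.ext (rotInv_rot i c.1)
  right_inv c := Subtype.ext (rot_rotInv i c.1)

/-- The group of global rotations of the edgeless cube. -/
def rotGroup (L : Type u) : Subgroup (Equiv.Perm (Cell L)) :=
  Subgroup.closure (Set.range (rotAllPerm (L := L)))

/-- A configuration of the edgeless cube is standard if every non-center cluster contains
exactly four cells of each of the six colors, and its restriction to the center cluster is
obtained from the solved configuration by a global rotation of the cube. -/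
def Standard {L : Type u} (f : Cell L → Option Color) : Prop :=
  (∀ c : Cell L, ¬IsCenter c → ∀ γ : Color, {d ∈ cluster c | f d = some γ}.ncard = 4) ∧
  ∃ g ∈ rotGroup L, ∀ d : Cell L, IsCenter d → f d = fSolved L (g⁻¹ d)

/-- A configuration is invariant under all quarter-turn face twists. -/
def FaceInvariant {L : Type u} (f : Cell L → Option Color) : Prop :=
  ∀ (i : Axis) (α : ExtCoord L), α.isInfB = true →
    ∀ c : Cell L, f ((quarterTurn i α)⁻¹ c) = f c

/-! ### Quadrants and cluster configurations -/

/-- The upper-right quadrant `D` of the Front face: the cells `(x, y, +∞)` with `x ∈ L`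
and `y ∈ {0} ∪ L`; every non-center cluster has a unique representative in `D`. -/
def Dset (L : Type u) : Set (Cell L) :=
  {c | ∃ (a : L) (b : ExtCoord L), (b = ExtCoord.zero ∨ ∃ r : L, b = ExtCoord.pos r) ∧
    c.1 = (ExtCoord.pos a, b, ExtCoord.posInf)}

/-- Two cells lie in the same face quadrant (an image of `D` under a global rotation). -/
def SameQuadrant {L : Type u} (d d' : Cell L) : Prop :=
  ∃ g ∈ rotGroup L, d ∈ (fun c => g c) '' Dset L ∧ d' ∈ (fun c => g c) '' Dset L

/-! ### Coupled cells of the edged cube -/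

/-- Two cells of the edged cube are coupled if they occupy the same location but belong to
different faces (they are parts of a common edge or corner cubie). -/
def Coupled {L : Type u} (c c' : ECell L) : Prop := c.1.1 = c'.1.1 ∧ c.1.2 ≠ c'.1.2

/-- An edge cell: exactly two infinite coordinates. -/
def IsEdgeCell {L : Type u} (c : ECell L) : Prop := infCount c.1.1 = 2

/-- A corner cell: three infinite coordinates. -/
def IsCornerCell {L : Type u} (c : ECell L) : Prop := infCount c.1.1 = 3

/-- An edge-cross cell: an edge cell one of whose coordinates is `0`. -/
def IsEdgeCross {L : Type u} (c : ECell L) : Prop :=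
  IsEdgeCell c ∧ 0 < zeroCount c.1.1

end InfRubik

/-!
Every basic twist preserves the coupling of cells, the number of infinite coordinates of a cell
and every cluster, so it maps the coupled pairs of a cluster (and the coupled corner triples)
to themselves; hence a configuration whose colours tell such tuples apart is transformed by a
twist into another one. The property also survives limit stages: the finitely many cells of two
tuples all carry their final colours from some earlier stage on. It therefore suffices to check
the solved configuration, where the colour of a cell gives its tag and its infinite coordinate.
This pins down a corner location, and an edge location up to its finite coordinate `±r`. In a
cluster without zero coordinates `r` is a twist invariant, and so is the parity of the number of
negative coordinates corrected by whether the tag cyclically follows the finite axis: a quarter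
turn reflects one nonzero coordinate and also flips the correction term.
-/

namespace InfRubik

open Filter

section Run

variable {Cl : Type v} {X : Type u}

theorem run_zero (σ : Ordinal.{v} → Equiv.Perm Cl) (f0 : Cl → Option X) : run σ f0 0 = f0 :=
  Ordinal.limitRecOn_zero ..

theorem run_add_one (σ : Ordinal.{v} → Equiv.Perm Cl) (f0 : Cl → Option X) (η : Ordinal.{v}) :
    run σ f0 (η + 1) = run σ f0 η ∘ ⇑(σ η)⁻¹ :=
  Ordinal.limitRecOn_add_one ..

theorem run_limit (σ : Ordinal.{v} → Equiv.Perm Cl) (f0 : Cl → Option X) {lam : Ordinal.{v}}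
    (hlam : Order.IsSuccLimit lam) :
    run σ f0 lam = fun c => eventualVal lam (fun η _ => run σ f0 η c) :=
  Ordinal.limitRecOn_limit (motive := fun _ => Cl → Option X) _ _ _ _ hlam

theorem eventually_of_eventualVal_eq_some {lam : Ordinal.{v}} {g : ∀ η, η < lam → Option X}
    {a : X} (h : eventualVal lam g = some a) :
    ∀ᶠ η : Set.Iio lam in atTop, g η η.2 = some a := by
  classical
  unfold eventualVal at h
  split_ifs at h with hex
  obtain ⟨γ, hγ, hstable⟩ := hex.choose_spec
  rw [Option.some_inj.1 h] at hstable
  exact (eventually_ge_atTop ⟨γ, hγ⟩).mono fun η hη => hstable η η.2 hη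

theorem eventually_run_eq_run_limit (σ : Ordinal.{v} → Equiv.Perm Cl) (f0 : Cl → Option X)
    {lam : Ordinal.{v}} (hlam : Order.IsSuccLimit lam) {c : Cl} (hc : run σ f0 lam c ≠ none) :
    ∀ᶠ η : Set.Iio lam in atTop, run σ f0 η c = run σ f0 lam c := by
  obtain ⟨a, ha⟩ := Option.ne_none_iff_exists'.1 hc
  rw [ha]
  rw [run_limit σ f0 hlam] at ha
  exact eventually_of_eventualVal_eq_some ha

def TupleInjective {ι : Type*} (A : Set (ι → Cl)) (f : Cl → Option X) : Prop :=
  Set.InjOn (fun x => f ∘ x) {x | x ∈ A ∧ ∀ i, f (x i) ≠ none}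

variable {ι : Type*} {A : Set (ι → Cl)}

theorem TupleInjective.comp_perm {f : Cl → Option X} (hf : TupleInjective A f)
    {g : Equiv.Perm Cl} (hA : ∀ x ∈ A, ⇑g ∘ x ∈ A) : TupleInjective A (f ∘ ⇑g) := by
  rintro x ⟨hxA, hx⟩ y ⟨hyA, hy⟩ hxy
  exact g.injective.comp_left (hf ⟨hA x hxA, hx⟩ ⟨hA y hyA, hy⟩ hxy)

theorem tupleInjective_run [Finite ι] {f0 : Cl → Option X} (h0 : TupleInjective A f0)
    (σ : Ordinal.{v} → Equiv.Perm Cl) (θ : Ordinal.{v})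
    (hσ : ∀ η < θ, ∀ x ∈ A, ⇑(σ η)⁻¹ ∘ x ∈ A) : TupleInjective A (run σ f0 θ) := by
  induction θ using Ordinal.limitRecOn with
  | zero => rwa [run_zero]
  | add_one η ih =>
    have hη : η < η + 1 := Order.lt_add_one_iff.2 le_rfl
    rw [run_add_one]
    exact (ih fun ζ hζ => hσ ζ (hζ.trans hη)).comp_perm (hσ η hη)
  | limit lam hlam ih =>
    rintro x ⟨hxA, hx⟩ y ⟨hyA, hy⟩ hxy
    have hxy' := congrFun hxy
    have hev : ∀ᶠ η : Set.Iio lam in atTop, ∀ i,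
        run σ f0 η (x i) = run σ f0 lam (x i) ∧ run σ f0 η (y i) = run σ f0 lam (y i) :=
      eventually_all.2 fun i => (eventually_run_eq_run_limit σ f0 hlam (hx i)).and
        (eventually_run_eq_run_limit σ f0 hlam (hy i))
    have : Nonempty (Set.Iio lam) := ⟨⟨0, hlam.pos⟩⟩
    obtain ⟨⟨η, hη⟩, hagree⟩ := hev.exists
    refine ih η hη (fun ζ hζ => hσ ζ (hζ.trans hη))
      ⟨hxA, fun i => (hagree i).1 ▸ hx i⟩ ⟨hyA, fun i => (hagree i).2 ▸ hy i⟩ (funext fun i => ?_)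
    simp only [Function.comp_apply, (hagree i).1, (hagree i).2]
    exact hxy' i

theorem TupleInjective.of_accessible [Finite ι] {B : Equiv.Perm Cl → Prop}
    (hA : ∀ g ∈ Subgroup.closure {π | B π}, ∀ x ∈ A, ⇑g ∘ x ∈ A)
    {f0 f : Cl → Option Color} (h0 : TupleInjective A f0) (hf : Accessible B f0 f) :
    TupleInjective A f := by
  obtain ⟨s, -, rfl⟩ := hf
  exact tupleInjective_run h0 s.seq s.len fun η hη =>
    hA _ (inv_mem (Subgroup.subset_closure (s.basic η hη)))

theorem TupleInjective.eq_of_pair {A : Set (Fin 2 → Cl)} {f : Cl → Option X}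
    (hf : TupleInjective A f) {c c' d d' : Cl} {γ γ' : X} (hc : ![c, c'] ∈ A) (hd : ![d, d'] ∈ A)
    (hfc : f c = some γ) (hfc' : f c' = some γ') (hfd : f d = some γ) (hfd' : f d' = some γ') :
    c = d ∧ c' = d' := by
  have h := hf ⟨hc, by simp [Fin.forall_fin_two, hfc, hfc']⟩
    ⟨hd, by simp [Fin.forall_fin_two, hfd, hfd']⟩
    (funext <| by simp [Fin.forall_fin_two, hfc, hfc', hfd, hfd'])
  exact ⟨congrFun h 0, congrFun h 1⟩

theorem TupleInjective.eq_of_triple {A : Set (Fin 3 → Cl)} {f : Cl → Option X}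
    (hf : TupleInjective A f) {c c' c'' d d' d'' : Cl} {γ γ' γ'' : X} (hc : ![c, c', c''] ∈ A)
    (hd : ![d, d', d''] ∈ A) (hfc : f c = some γ) (hfc' : f c' = some γ')
    (hfc'' : f c'' = some γ'') (hfd : f d = some γ) (hfd' : f d' = some γ')
    (hfd'' : f d'' = some γ'') : c = d ∧ c' = d' ∧ c'' = d'' := by
  have h := hf ⟨hc, by simp [Fin.forall_fin_succ, hfc, hfc', hfc'']⟩
    ⟨hd, by simp [Fin.forall_fin_succ, hfd, hfd', hfd'']⟩
    (funext <| by simp [Fin.forall_fin_succ, hfc, hfc', hfc'', hfd, hfd', hfd''])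
  exact ⟨congrFun h 0, congrFun h 1, congrFun h 2⟩

end Run

instance : Fintype Axis := ⟨{.x, .y, .z}, fun a => by cases a <;> simp⟩

def Axis.succ : Axis → Axis
  | .x => .y
  | .y => .z
  | .z => .x

theorem Axis.exists_iff {P : Axis → Prop} : (∃ m, P m) ↔ P .x ∨ P .y ∨ P .z :=
  ⟨fun ⟨m, hm⟩ => by cases m <;> simp [hm], by rintro (h | h | h) <;> exact ⟨_, h⟩⟩

theorem Axis.exists_third {t t' : Axis} (h : t ≠ t') :
    ∃ k, k ≠ t ∧ k ≠ t' ∧ ∀ m, m = t ∨ m = t' ∨ m = k := by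
  revert t t'; decide

theorem Axis.eq_or_eq_or_eq {t t' t'' : Axis} (h : t ≠ t') (h' : t ≠ t'') (h'' : t' ≠ t'')
    (m : Axis) : m = t ∨ m = t' ∨ m = t'' := by
  revert t t' t'' m; decide

theorem faceColor_inj {a a' : Axis} {b b' : Bool} :
    faceColor a b = faceColor a' b' ↔ a = a' ∧ b = b' := by
  revert a a' b b'; decide

namespace ExtCoord

variable {L : Type u}

def isNeg : ExtCoord L → Bool
  | .neg _ => true
  | .negInf => true
  | _ => false

def label : ExtCoord L → Option L
  | .neg a => some a
  | .pos a => some a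
  | _ => none

@[simp] theorem label_reflect (c : ExtCoord L) : c.reflect.label = c.label := by
  cases c <;> rfl

theorem label_eq_none_of_isInfB {c : ExtCoord L} (h : c.isInfB) : c.label = none := by
  cases c <;> simp_all [isInfB, label]

theorem exists_label_eq_some {c : ExtCoord L} (hinf : c.isInfB = false)
    (hzero : c.isZeroB = false) : ∃ a, c.label = some a := by
  cases c <;> simp_all [isInfB, isZeroB, label]

theorem eq_of_label_eq_some {c d : ExtCoord L} {a : L} (hc : c.label = some a)
    (hd : d.label = some a) (hneg : c.isNeg = d.isNeg) : c = d := by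
  cases c <;> cases d <;> simp_all [label, isNeg]

theorem eq_posInf_or_eq_negInf {c : ExtCoord L} (h : c.isInfB) : c = posInf ∨ c = negInf := by
  cases c <;> simp_all [isInfB]

end ExtCoord

namespace Triple

variable {L : Type u}

theorem ext_coord {p q : Triple L} (h : ∀ m, p.coord m = q.coord m) : p = q :=
  Prod.ext (h .x) (Prod.ext (h .y) (h .z))

/-- `infCount` and `zeroCount` are such sums by definition. -/
def sum (g : ExtCoord L → ℕ) (p : Triple L) : ℕ := g p.1 + g p.2.1 + g p.2.2

theorem sum_eq_of_ne (g : ExtCoord L → ℕ) (p : Triple L) {t t' k : Axis} (htt' : t ≠ t')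
    (hkt : k ≠ t) (hkt' : k ≠ t') :
    p.sum g = g (p.coord t) + g (p.coord t') + g (p.coord k) := by
  cases t <;> cases t' <;> cases k <;> simp_all [sum, coord] <;> omega

theorem sum_rot {g : ExtCoord L → ℕ} (hg : ∀ c, g c.reflect = g c) (i : Axis) (p : Triple L) :
    (rot i p).sum g = p.sum g := by
  cases i <;> simp only [sum, rot, hg] <;> ac_rfl

end Triple

variable {L : Type u}

def negCount (p : Triple L) : ℕ := p.sum fun c => if c.isNeg then 1 else 0

def labels (p : Triple L) : Set L := {a | ∃ m, (p.coord m).label = some a}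

/-- For an edge location the second summand says whether the tag `t` cyclically follows the
finite axis. -/
def edgeParity (p : Triple L) (t : Axis) : ℕ :=
  (negCount p + if (p.coord t.succ).isInfB then 1 else 0) % 2

theorem zeroCount_rot (i : Axis) (p : Triple L) : zeroCount (rot i p) = zeroCount p :=
  Triple.sum_rot (g := fun c => if c.isZeroB then 1 else 0) (by simp) i p

theorem labels_rot (i : Axis) (p : Triple L) : labels (rot i p) = labels p := by
  ext a
  cases i <;> simp only [labels, Set.mem_ofPred_eq, Axis.exists_iff, rot, Triple.coord,
    ExtCoord.label_reflect] <;> tauto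

theorem edgeParity_rot (i t : Axis) {p : Triple L} (h2 : infCount p = 2) (h0 : zeroCount p = 0)
    (ht : (p.coord t).isInfB) : edgeParity (rot i p) (tagMap i t) = edgeParity p t := by
  obtain ⟨a, b, c⟩ := p
  cases a <;> cases b <;> cases c <;>
    simp [infCount, zeroCount, ExtCoord.isInfB, ExtCoord.isZeroB] at h2 h0 <;>
    cases i <;> cases t <;>
    simp_all [edgeParity, negCount, Triple.sum, rot, Triple.coord, tagMap, Axis.succ,
      ExtCoord.isInfB, ExtCoord.isNeg, ExtCoord.reflect]

theorem isInfB_coord_eq_false {p : Triple L} {t t' k : Axis} (htt' : t ≠ t') (hkt : k ≠ t)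
    (hkt' : k ≠ t') (h2 : infCount p = 2) (ht : (p.coord t).isInfB) (ht' : (p.coord t').isInfB) :
    (p.coord k).isInfB = false := by
  have := p.sum_eq_of_ne (fun c => if c.isInfB then 1 else 0) htt' hkt hkt'
  simp only [ht, ht', if_true] at this
  change infCount p = _ at this
  simpa [h2] using this

theorem isZeroB_coord_eq_false {p : Triple L} (h0 : zeroCount p = 0) (k : Axis) :
    (p.coord k).isZeroB = false := by
  cases k <;> simp_all [zeroCount, Triple.coord]

theorem eq_of_edgeParity_eq {p q : Triple L} {t t' : Axis} (htt' : t ≠ t')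
    (hp2 : infCount p = 2) (hp0 : zeroCount p = 0) (hq2 : infCount q = 2)
    (ht : (p.coord t).isInfB) (ht' : (p.coord t').isInfB)
    (hqt : q.coord t = p.coord t) (hqt' : q.coord t' = p.coord t')
    (hlabels : labels q = labels p) (hparity : edgeParity q t = edgeParity p t) : q = p := by
  obtain ⟨k, hkt, hkt', hcover⟩ := Axis.exists_third htt'
  have hpk := isInfB_coord_eq_false htt' hkt hkt' hp2 ht ht'
  have hqk := isInfB_coord_eq_false htt' hkt hkt' hq2 (hqt ▸ ht) (hqt' ▸ ht')
  obtain ⟨a, ha⟩ := ExtCoord.exists_label_eq_some hpk (isZeroB_coord_eq_false hp0 k)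
  have hqa : (q.coord k).label = some a := by
    obtain ⟨m, hm⟩ : a ∈ labels q := hlabels ▸ ⟨k, ha⟩
    rcases hcover m with rfl | rfl | rfl
    · simp [hqt, ExtCoord.label_eq_none_of_isInfB ht] at hm
    · simp [hqt', ExtCoord.label_eq_none_of_isInfB ht'] at hm
    · exact hm
  have hinf : ∀ m, (q.coord m).isInfB = (p.coord m).isInfB := by
    intro m
    rcases hcover m with rfl | rfl | rfl
    exacts [by rw [hqt], by rw [hqt'], by rw [hpk, hqk]]
  have hneg : (q.coord k).isNeg = (p.coord k).isNeg := by
    simp only [edgeParity, hinf, negCount, q.sum_eq_of_ne _ htt' hkt hkt',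
      p.sum_eq_of_ne _ htt' hkt hkt', hqt, hqt'] at hparity
    revert hparity
    cases (q.coord k).isNeg <;> cases (p.coord k).isNeg <;> simp <;> omega
  refine Triple.ext_coord fun m => ?_
  rcases hcover m with rfl | rfl | rfl
  exacts [hqt, hqt', ExtCoord.eq_of_label_eq_some hqa ha hneg]

section Invariance

variable {α : Type*} {β : Type*}

def invariantSubgroup (φ : α → β) : Subgroup (Equiv.Perm α) where
  carrier := {g | ∀ a, φ (g a) = φ a}
  one_mem' _ := rfl
  mul_mem' hg hh a := (hg _).trans (hh a)
  inv_mem' {g} hg a := by simpa using (hg (g⁻¹ a)).symm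

def relInvariantSubgroup (R : α → α → Prop) : Subgroup (Equiv.Perm α) where
  carrier := {g | ∀ a b, R (g a) (g b) ↔ R a b}
  one_mem' _ _ := Iff.rfl
  mul_mem' hg hh a b := (hg _ _).trans (hh a b)
  inv_mem' {g} hg a b := by simpa using (hg (g⁻¹ a) (g⁻¹ b)).symm

end Invariance

theorem etwistGroup_le {H : Subgroup (Equiv.Perm (ECell L))}
    (h : ∀ i α, equarterTurn i α ∈ H) : etwistGroup L ≤ H :=
  (Subgroup.closure_le H).2 <| by
    rintro _ ⟨i, α, rfl | rfl | rfl⟩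
    exacts [h i α, pow_mem (h i α) 2, inv_mem (h i α)]

theorem apply_eq_of_mem_etwistGroup {β : Type*} {φ : ECell L → β}
    (hφ : ∀ i α c, φ (equarterTurn i α c) = φ c) {g : Equiv.Perm (ECell L)}
    (hg : g ∈ etwistGroup L) (c : ECell L) : φ (g c) = φ c :=
  etwistGroup_le (H := invariantSubgroup φ) (fun i α => hφ i α) hg c

theorem apply_mem_ecluster {g : Equiv.Perm (ECell L)} (hg : g ∈ etwistGroup L) {c e : ECell L}
    (h : c ∈ ecluster e) : g c ∈ ecluster e := by
  obtain ⟨g', hg', rfl⟩ := h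
  exact ⟨g * g', mul_mem hg hg', rfl⟩

theorem equarterTurn_apply_fst_fst (i : Axis) (α : ExtCoord L) (c : ECell L) :
    (equarterTurn i α c).1.1 = qtTriple i α c.1.1 := by
  change (eqtFun i α c.1).1 = _
  unfold eqtFun qtTriple
  split_ifs <;> rfl

theorem zeroCount_qtTriple (i : Axis) (α : ExtCoord L) (p : Triple L) :
    zeroCount (qtTriple i α p) = zeroCount p := by
  unfold qtTriple
  split_ifs
  exacts [zeroCount_rot i p, rfl]

theorem labels_qtTriple (i : Axis) (α : ExtCoord L) (p : Triple L) :
    labels (qtTriple i α p) = labels p := by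
  unfold qtTriple
  split_ifs
  exacts [labels_rot i p, rfl]

theorem edgeParity_equarterTurn (i : Axis) (α : ExtCoord L) {c : ECell L}
    (h2 : infCount c.1.1 = 2) (h0 : zeroCount c.1.1 = 0) :
    edgeParity (equarterTurn i α c).1.1 (equarterTurn i α c).1.2 = edgeParity c.1.1 c.1.2 := by
  change edgeParity (eqtFun i α c.1).1 (eqtFun i α c.1).2 = _
  unfold eqtFun
  split_ifs
  exacts [edgeParity_rot i c.1.2 h2 h0 c.2, rfl]

theorem ECell.ext_iff {c c' : ECell L} : c = c' ↔ c.1.1 = c'.1.1 ∧ c.1.2 = c'.1.2 :=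
  ⟨by rintro rfl; exact ⟨rfl, rfl⟩, fun h => Subtype.ext (Prod.ext h.1 h.2)⟩

theorem coupled_iff {c c' : ECell L} : Coupled c c' ↔ c.1.1 = c'.1.1 ∧ c ≠ c' := by
  have := ECell.ext_iff (c := c) (c' := c')
  unfold Coupled
  tauto

theorem Coupled.apply {g : Equiv.Perm (ECell L)} (hg : g ∈ etwistGroup L) {c c' : ECell L}
    (h : Coupled c c') : Coupled (g c) (g c') := by
  have hloc : g ∈ relInvariantSubgroup fun c c' : ECell L => c.1.1 = c'.1.1 :=
    etwistGroup_le (fun i α c c' => by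
      simp only [equarterTurn_apply_fst_fst]
      exact (Function.LeftInverse.injective (qtTripleInv_qtTriple i α)).eq_iff) hg
  rw [coupled_iff] at h ⊢
  exact ⟨(hloc c c').2 h.1, g.injective.ne h.2⟩

theorem apply_fst_fst_eq_of_mem_etwistGroup {β : Type*} {φ : Triple L → β}
    (hφ : ∀ i α p, φ (qtTriple i α p) = φ p) {g : Equiv.Perm (ECell L)}
    (hg : g ∈ etwistGroup L) (c : ECell L) : φ (g c).1.1 = φ c.1.1 :=
  apply_eq_of_mem_etwistGroup (φ := fun c => φ c.1.1)
    (fun i α c => by rw [equarterTurn_apply_fst_fst, hφ]) hg c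

def zeroFreeEdgeParity (c : ECell L) : Option ℕ :=
  if infCount c.1.1 = 2 ∧ zeroCount c.1.1 = 0 then some (edgeParity c.1.1 c.1.2) else none

theorem zeroFreeEdgeParity_equarterTurn (i : Axis) (α : ExtCoord L) (c : ECell L) :
    zeroFreeEdgeParity (equarterTurn i α c) = zeroFreeEdgeParity c := by
  have hinf : infCount (equarterTurn i α c).1.1 = infCount c.1.1 := by
    rw [equarterTurn_apply_fst_fst, infCount_qtTriple]
  have hzero : zeroCount (equarterTurn i α c).1.1 = zeroCount c.1.1 := by
    rw [equarterTurn_apply_fst_fst, zeroCount_qtTriple]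
  unfold zeroFreeEdgeParity
  rw [hinf, hzero]
  split_ifs with h
  exacts [by rw [edgeParity_equarterTurn i α h.1 h.2], rfl]

def coupledPairs (e : ECell L) : Set (Fin 2 → ECell L) :=
  {x | x 0 ∈ ecluster e ∧ Coupled (x 0) (x 1)}

def coupledCornerTriples (L : Type u) : Set (Fin 3 → ECell L) :=
  {x | IsCornerCell (x 0) ∧ Coupled (x 0) (x 1) ∧ Coupled (x 0) (x 2) ∧ Coupled (x 1) (x 2)}

theorem comp_mem_coupledPairs {g : Equiv.Perm (ECell L)} (hg : g ∈ etwistGroup L)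
    {e : ECell L} {x : Fin 2 → ECell L} (hx : x ∈ coupledPairs e) : ⇑g ∘ x ∈ coupledPairs e :=
  ⟨apply_mem_ecluster hg hx.1, hx.2.apply hg⟩

theorem comp_mem_coupledCornerTriples {g : Equiv.Perm (ECell L)} (hg : g ∈ etwistGroup L)
    {x : Fin 3 → ECell L} (hx : x ∈ coupledCornerTriples L) : ⇑g ∘ x ∈ coupledCornerTriples L :=
  ⟨(apply_fst_fst_eq_of_mem_etwistGroup infCount_qtTriple hg _).trans hx.1,
    hx.2.1.apply hg, hx.2.2.1.apply hg, hx.2.2.2.apply hg⟩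

theorem tag_eq_and_coord_eq_of_efSolved_eq {c d : ECell L} (h : efSolved L c = efSolved L d) :
    c.1.2 = d.1.2 ∧ c.1.1.coord c.1.2 = d.1.1.coord d.1.2 := by
  rcases ExtCoord.eq_posInf_or_eq_negInf c.2 with hc | hc <;>
    rcases ExtCoord.eq_posInf_or_eq_negInf d.2 with hd | hd <;>
    simp only [efSolved, hc, hd, reduceCtorEq, if_true, if_false, Option.some_inj] at h <;>
    obtain ⟨htag, hsign⟩ := faceColor_inj.1 h <;> simp_all

theorem tupleInjective_coupledPairs_efSolved {e : ECell L} (he : IsEdgeCell e)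
    (hcross : ¬IsEdgeCross e) : TupleInjective (coupledPairs e) (efSolved L) := by
  have he0 : zeroCount e.1.1 = 0 := by
    by_contra h
    exact hcross ⟨he, Nat.pos_of_ne_zero h⟩
  have he2 : infCount e.1.1 = 2 := he
  have hinv : ∀ c ∈ ecluster e, infCount c.1.1 = 2 ∧ zeroCount c.1.1 = 0 ∧
      labels c.1.1 = labels e.1.1 ∧ edgeParity c.1.1 c.1.2 = edgeParity e.1.1 e.1.2 := by
    rintro _ ⟨g, hg, rfl⟩
    refine ⟨(apply_fst_fst_eq_of_mem_etwistGroup infCount_qtTriple hg e).trans he2,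
      (apply_fst_fst_eq_of_mem_etwistGroup zeroCount_qtTriple hg e).trans he0,
      apply_fst_fst_eq_of_mem_etwistGroup labels_qtTriple hg e, ?_⟩
    have hparity := apply_eq_of_mem_etwistGroup zeroFreeEdgeParity_equarterTurn hg e
    simpa [zeroFreeEdgeParity, he0, he2,
      apply_fst_fst_eq_of_mem_etwistGroup infCount_qtTriple hg e,
      apply_fst_fst_eq_of_mem_etwistGroup zeroCount_qtTriple hg e] using hparity
  rintro x ⟨⟨hx, hxc⟩, -⟩ y ⟨⟨hy, hyc⟩, -⟩ hxy
  obtain ⟨ht, hct⟩ := tag_eq_and_coord_eq_of_efSolved_eq (congrFun hxy 0)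
  obtain ⟨ht', hct'⟩ := tag_eq_and_coord_eq_of_efSolved_eq (congrFun hxy 1)
  obtain ⟨hx2, hx0, hxl, hxp⟩ := hinv _ hx
  obtain ⟨hy2, -, hyl, hyp⟩ := hinv _ hy
  have hloc : (y 0).1.1 = (x 0).1.1 :=
    eq_of_edgeParity_eq hxc.2 hx2 hx0 hy2 (x 0).2 (hxc.1 ▸ (x 1).2) (ht ▸ hct.symm)
      (by rw [hyc.1, hxc.1, hct', ht']) (hyl.trans hxl.symm) (by rw [hxp, ← hyp, ht])
  funext i
  fin_cases i
  exacts [ECell.ext_iff.2 ⟨hloc.symm, ht⟩,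
    ECell.ext_iff.2 ⟨hxc.1.symm.trans (hloc.symm.trans hyc.1), ht'⟩]

theorem tupleInjective_coupledCornerTriples_efSolved :
    TupleInjective (coupledCornerTriples L) (efSolved L) := by
  rintro x ⟨⟨-, h01, h02, h12⟩, -⟩ y ⟨⟨-, k01, k02, k12⟩, -⟩ hxy
  have hface := fun i => tag_eq_and_coord_eq_of_efSolved_eq (congrFun hxy i)
  have hloc : (x 0).1.1 = (y 0).1.1 := by
    refine Triple.ext_coord fun m => ?_
    rcases Axis.eq_or_eq_or_eq h01.2 h02.2 h12.2 m with rfl | rfl | rfl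
    · rw [(hface 0).2, (hface 0).1]
    · rw [h01.1, k01.1, (hface 1).2, (hface 1).1]
    · rw [h02.1, k02.1, (hface 2).2, (hface 2).1]
  have hloc' : ∀ i, (x i).1.1 = (y i).1.1 := by
    intro i
    fin_cases i
    exacts [hloc, h01.1.symm.trans (hloc.trans k01.1), h02.1.symm.trans (hloc.trans k02.1)]
  exact funext fun i => ECell.ext_iff.2 ⟨hloc' i, (hface i).1⟩

end InfRubik

open InfRubik in
theorem color_coupling_general {L : Type u} (f : ECell L → Option Color)
    (hf : Accessible (IsEBasic L) (efSolved L) f) :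
    (∀ (γ γ' : Color) (e : ECell L),
      IsEdgeCell e → ¬ IsCornerCell e → ¬ IsEdgeCross e →
      ∀ c₁ c₁' c₂ c₂' : ECell L,
        c₁ ∈ ecluster e → Coupled c₁ c₁' → f c₁ = some γ → f c₁' = some γ' →
        c₂ ∈ ecluster e → Coupled c₂ c₂' → f c₂ = some γ → f c₂' = some γ' →
        c₁ = c₂ ∧ c₁' = c₂') ∧
    (∀ (γ γ' γ'' : Color) (c₁ c₁' c₁'' c₂ c₂' c₂'' : ECell L),
        IsCornerCell c₁ → Coupled c₁ c₁' → Coupled c₁ c₁'' → Coupled c₁' c₁'' →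
        f c₁ = some γ → f c₁' = some γ' → f c₁'' = some γ'' →
        IsCornerCell c₂ → Coupled c₂ c₂' → Coupled c₂ c₂'' → Coupled c₂' c₂'' →
        f c₂ = some γ → f c₂' = some γ' → f c₂'' = some γ'' →
        c₁ = c₂ ∧ c₁' = c₂' ∧ c₁'' = c₂'') := by
  refine ⟨fun γ γ' e he _ hcross c₁ c₁' c₂ c₂' h₁ h₁₁' hf₁ hf₁' h₂ h₂₂' hf₂ hf₂' => ?_,
    fun γ γ' γ'' c₁ c₁' c₁'' c₂ c₂' c₂'' h₁ h₁₁' h₁₁'' h₁'₁'' hf₁ hf₁' hf₁''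
      h₂ h₂₂' h₂₂'' h₂'₂'' hf₂ hf₂' hf₂'' => ?_⟩
  · have hpairs := (tupleInjective_coupledPairs_efSolved he hcross).of_accessible
      (fun _ hg _ => comp_mem_coupledPairs hg) hf
    exact hpairs.eq_of_pair ⟨h₁, h₁₁'⟩ ⟨h₂, h₂₂'⟩ hf₁ hf₁' hf₂ hf₂'
  · have htriples := tupleInjective_coupledCornerTriples_efSolved.of_accessible
      (fun _ hg _ => comp_mem_coupledCornerTriples hg) hf
    exact htriples.eq_of_triple ⟨h₁, h₁₁', h₁₁'', h₁'₁''⟩ ⟨h₂, h₂₂', h₂₂'', h₂'₂''⟩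
      hf₁ hf₁' hf₁'' hf₂ hf₂' hf₂''

open InfRubik in
/-- In a legal configuration of the edged cube accessible from the solved configuration,
for each pair of colors and each non-corner edge cluster there is at most one pair of
coupled edge cells carrying those colors, and for each triple of colors there is at most
one triple of mutually coupled corner cells carrying those colors. -/
theorem color_coupling {L : Type u} [Infinite L] (f : ECell L → Option Color)
    (hf : Accessible (IsEBasic L) (efSolved L) f) :
    (∀ (γ γ' : Color) (e : ECell L),
      IsEdgeCell e → ¬ IsCornerCell e → ¬ IsEdgeCross e →
      ∀ c₁ c₁' c₂ c₂' : ECell L,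
        c₁ ∈ ecluster e → Coupled c₁ c₁' → f c₁ = some γ → f c₁' = some γ' →
        c₂ ∈ ecluster e → Coupled c₂ c₂' → f c₂ = some γ → f c₂' = some γ' →
        c₁ = c₂ ∧ c₁' = c₂') ∧
    (∀ (γ γ' γ'' : Color) (c₁ c₁' c₁'' c₂ c₂' c₂'' : ECell L),
        IsCornerCell c₁ → Coupled c₁ c₁' → Coupled c₁ c₁'' → Coupled c₁' c₁'' →
        f c₁ = some γ → f c₁' = some γ' → f c₁'' = some γ'' →
        IsCornerCell c₂ → Coupled c₂ c₂' → Coupled c₂ c₂'' → Coupled c₂' c₂'' →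
        f c₂ = some γ → f c₂' = some γ' → f c₂'' = some γ'' →
        c₁ = c₂ ∧ c₁' = c₂' ∧ c₁'' = c₂'') :=
  color_coupling_general f hf
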